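/- Let ν, E be real numbers and let Ψ : ℂ → ℂ be a smooth function with (L_κ^{ν+κ} Ψ)(z) = E Ψ(z) for all z with 1 + κ|z|² > 0. Then (L_κ^ν (∇_{ν+κ} Ψ))(z) = (E + 2ν + κ)(∇_{ν+κ} Ψ)(z) for all z with 1 + κ|z|² > 0. -/

import Mathlib

open Complex MeasureTheory Filter

/-- Wirtinger derivative ∂f/∂z = (1/2)(∂f/∂x − i ∂f/∂y). -/
noncomputable def wderiv (f : ℂ → ℂ) (z : ℂ) : ℂ :=
  (fderiv ℝ f z 1 - Complex.I * fderiv ℝ f z Complex.I) / 2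

/-- Anti-holomorphic Wirtinger derivative ∂f/∂z̄ = (1/2)(∂f/∂x + i ∂f/∂y). -/
noncomputable def wderivBar (f : ℂ → ℂ) (z : ℂ) : ℂ :=
  (fderiv ℝ f z 1 + Complex.I * fderiv ℝ f z Complex.I) / 2

/-- Twisted Laplacian L_κ^ν. -/
noncomputable def twistedLap (κ ν : ℝ) (f : ℂ → ℂ) (z : ℂ) : ℂ :=
  -(((1 + κ * Complex.normSq z : ℝ) : ℂ) ^ 2 * wderiv (wderivBar f) z
    + (ν : ℂ) * ((1 + κ * Complex.normSq z : ℝ) : ℂ) *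
        (z * wderiv f z - (starRingEnd ℂ) z * wderivBar f z)
    - (ν : ℂ) ^ 2 * ((Complex.normSq z : ℝ) : ℂ) * f z)

/-- (∇_α f)(z) = −(1+κ|z|²) ∂f/∂z + α z̄ f(z). -/
noncomputable def nabla (κ α : ℝ) (f : ℂ → ℂ) (z : ℂ) : ℂ :=
  -((1 + κ * Complex.normSq z : ℝ) : ℂ) * wderiv f z + (α : ℂ) * (starRingEnd ℂ) z * f z

/-- (∇*_α f)(z) = (1+κ|z|²) ∂f/∂z̄ + (α−κ) z f(z). -/
noncomputable def nablaStar (κ α : ℝ) (f : ℂ → ℂ) (z : ℂ) : ℂ :=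
  ((1 + κ * Complex.normSq z : ℝ) : ℂ) * wderivBar f z + ((α - κ : ℝ) : ℂ) * z * f z

/-- ∇_{ν+κ} ∘ ∇_{ν+2κ} ∘ ⋯ ∘ ∇_{ν+mκ} (the identity when m = 0). -/
noncomputable def nablaChain (κ : ℝ) : ℕ → ℝ → (ℂ → ℂ) → (ℂ → ℂ)
  | 0, _, f => f
  | m + 1, ν, f => nabla κ (ν + κ) (nablaChain κ m (ν + κ) f)

/-- (D g)(z) = (1+κ|z|²)² ∂g/∂z. -/
noncomputable def Dop (κ : ℝ) (g : ℂ → ℂ) (z : ℂ) : ℂ :=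
  ((1 + κ * Complex.normSq z : ℝ) : ℂ) ^ 2 * wderiv g z

/-- Generalized binomial coefficient C(r,k) for real r. -/
noncomputable def genBinom (r : ℝ) (k : ℕ) : ℝ :=
  (∏ i ∈ Finset.range k, (r - i)) / (Nat.factorial k)

/-- Jacobi polynomial P_j^{(a,b)}(x) with real parameters a, b. -/
noncomputable def jacobiP (a b : ℝ) (j : ℕ) (x : ℝ) : ℝ :=
  ∑ s ∈ Finset.range (j + 1),
    genBinom ((j : ℝ) + a) (j - s) * genBinom ((j : ℝ) + b) s *
      ((x - 1) / 2) ^ s * ((x + 1) / 2) ^ (j - s)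

/-- Pochhammer symbol (a)_n = a(a+1)⋯(a+n−1). -/
noncomputable def risingFactorial (a : ℝ) (n : ℕ) : ℝ :=
  ∏ i ∈ Finset.range n, (a + i)


/-!
The operator `∇_{ν+κ}` intertwines the two twisted Laplacians up to a shift:
`L_κ^ν ∇_{ν+κ} = ∇_{ν+κ} L_κ^{ν+κ} + (2ν + κ) ∇_{ν+κ}` as operators on `C³` functions, on all
of `ℂ`. This is a direct computation with the Leibniz rules for `∂` and `∂̄`, the identities
`∂ z̄ = ∂̄ z = 0`, `∂ z = ∂̄ z̄ = 1` and the symmetry `∂∂̄ = ∂̄∂` of second derivatives.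
Since `∇_{ν+κ}` only involves the germ of its argument and `{1 + κ|z|² > 0}` is open, applying
the identity to an eigenfunction `Ψ` of `L_κ^{ν+κ}` gives the eigenvalue `E + 2ν + κ`.
-/

open ComplexConjugate

section Wirtinger

variable {f g : ℂ → ℂ} {z : ℂ}

lemma wderiv_add (hf : DifferentiableAt ℝ f z) (hg : DifferentiableAt ℝ g z) :
    wderiv (fun w => f w + g w) z = wderiv f z + wderiv g z := by
  simp only [wderiv, fderiv_fun_add hf hg]; simp; ring

lemma wderivBar_add (hf : DifferentiableAt ℝ f z) (hg : DifferentiableAt ℝ g z) :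
    wderivBar (fun w => f w + g w) z = wderivBar f z + wderivBar g z := by
  simp only [wderivBar, fderiv_fun_add hf hg]; simp; ring

lemma wderiv_sub (hf : DifferentiableAt ℝ f z) (hg : DifferentiableAt ℝ g z) :
    wderiv (fun w => f w - g w) z = wderiv f z - wderiv g z := by
  simp only [wderiv, fderiv_fun_sub hf hg]; simp; ring

lemma wderiv_neg : wderiv (fun w => -f w) z = -wderiv f z := by
  simp only [wderiv, fderiv_fun_neg]; simp; ring

lemma wderivBar_neg : wderivBar (fun w => -f w) z = -wderivBar f z := by
  simp only [wderivBar, fderiv_fun_neg]; simp; ring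

lemma wderiv_mul (hf : DifferentiableAt ℝ f z) (hg : DifferentiableAt ℝ g z) :
    wderiv (fun w => f w * g w) z = wderiv f z * g z + f z * wderiv g z := by
  simp only [wderiv, fderiv_fun_mul hf hg]; simp; ring

lemma wderivBar_mul (hf : DifferentiableAt ℝ f z) (hg : DifferentiableAt ℝ g z) :
    wderivBar (fun w => f w * g w) z = wderivBar f z * g z + f z * wderivBar g z := by
  simp only [wderivBar, fderiv_fun_mul hf hg]; simp; ring

lemma wderiv_const (c : ℂ) : wderiv (fun _ => c) z = 0 := by
  simp [wderiv]

lemma wderivBar_const (c : ℂ) : wderivBar (fun _ => c) z = 0 := by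
  simp [wderivBar]

lemma wderiv_id : wderiv (fun w => w) z = 1 := by
  simp [wderiv]

lemma wderivBar_id : wderivBar (fun w => w) z = 0 := by
  simp [wderivBar]

lemma fderiv_conj : fderiv ℝ (fun w => conj w) z = conjCLE.toContinuousLinearMap :=
  conjCLE.fderiv

lemma wderiv_conj : wderiv (fun w => conj w) z = 0 := by
  simp [wderiv, fderiv_conj]

lemma wderivBar_conj : wderivBar (fun w => conj w) z = 1 := by
  simp [wderivBar, fderiv_conj]

lemma Filter.EventuallyEq.wderiv_eq (h : f =ᶠ[nhds z] g) : wderiv f z = wderiv g z := by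
  simp only [wderiv, h.fderiv_eq]

lemma ContDiff.wderiv {m n : WithTop ℕ∞} (hf : ContDiff ℝ n f) (hmn : m + 1 ≤ n) :
    ContDiff ℝ m (wderiv f) :=
  have h := hf.fderiv_right hmn
  ((h.clm_apply contDiff_const).sub (contDiff_const.mul (h.clm_apply contDiff_const))).div_const 2

lemma ContDiff.wderivBar {m n : WithTop ℕ∞} (hf : ContDiff ℝ n f) (hmn : m + 1 ≤ n) :
    ContDiff ℝ m (wderivBar f) :=
  have h := hf.fderiv_right hmn
  ((h.clm_apply contDiff_const).add (contDiff_const.mul (h.clm_apply contDiff_const))).div_const 2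

lemma fderiv_wderiv_apply (hf : DifferentiableAt ℝ (fderiv ℝ f) z) (v : ℂ) :
    fderiv ℝ (wderiv f) z v =
      (fderiv ℝ (fderiv ℝ f) z v 1 - I * fderiv ℝ (fderiv ℝ f) z v I) / 2 := by
  have h1 := hf.hasFDerivAt.clm_apply (hasFDerivAt_const (1 : ℂ) z)
  have hI := hf.hasFDerivAt.clm_apply (hasFDerivAt_const I z)
  have := (h1.fun_sub (hI.const_mul I)).mul_const (2⁻¹ : ℂ)
  show fderiv ℝ (fun y => (fderiv ℝ f y 1 - I * fderiv ℝ f y I) * 2⁻¹) z v = _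
  rw [this.fderiv]
  simp; ring

lemma fderiv_wderivBar_apply (hf : DifferentiableAt ℝ (fderiv ℝ f) z) (v : ℂ) :
    fderiv ℝ (wderivBar f) z v =
      (fderiv ℝ (fderiv ℝ f) z v 1 + I * fderiv ℝ (fderiv ℝ f) z v I) / 2 := by
  have h1 := hf.hasFDerivAt.clm_apply (hasFDerivAt_const (1 : ℂ) z)
  have hI := hf.hasFDerivAt.clm_apply (hasFDerivAt_const I z)
  have := (h1.fun_add (hI.const_mul I)).mul_const (2⁻¹ : ℂ)
  show fderiv ℝ (fun y => (fderiv ℝ f y 1 + I * fderiv ℝ f y I) * 2⁻¹) z v = _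
  rw [this.fderiv]
  simp; ring

theorem wderiv_wderivBar_comm (hf : ContDiff ℝ 2 f) (z : ℂ) :
    wderiv (wderivBar f) z = wderivBar (wderiv f) z := by
  have hd : DifferentiableAt ℝ (fderiv ℝ f) z :=
    (hf.fderiv_right (m := 1) le_rfl).differentiable one_ne_zero z
  have hsymm := (hf.contDiffAt (x := z)).isSymmSndFDerivAt (by simp) I 1
  rw [wderiv, wderivBar, fderiv_wderiv_apply hd, fderiv_wderiv_apply hd,
    fderiv_wderivBar_apply hd, fderiv_wderivBar_apply hd, hsymm]
  ring

end Wirtinger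

section TwistedLaplacian

variable {f : ℂ → ℂ}

lemma ofReal_one_add_mul_normSq (κ : ℝ) (w : ℂ) :
    ((1 + κ * normSq w : ℝ) : ℂ) = 1 + κ * (w * conj w) := by
  rw [mul_conj]; push_cast; ring

lemma nabla_eq (κ α : ℝ) :
    nabla κ α f = fun w => -((1 + κ * (w * conj w)) * wderiv f w) + α * (conj w * f w) := by
  ext w; simp only [nabla, ofReal_one_add_mul_normSq]; ring

lemma twistedLap_eq (κ ν : ℝ) :
    twistedLap κ ν f = fun w =>
      -((1 + κ * (w * conj w)) * ((1 + κ * (w * conj w)) * wderiv (wderivBar f) w)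
        + ν * ((1 + κ * (w * conj w)) * (w * wderiv f w - conj w * wderivBar f w))
        - ν * (ν * (w * conj w * f w))) := by
  ext w; simp only [twistedLap, ofReal_one_add_mul_normSq, ← mul_conj]; ring

lemma wderivBar_nabla (κ α : ℝ) (hf : ContDiff ℝ 2 f) :
    wderivBar (nabla κ α f) = fun w =>
      -(κ * (w * wderiv f w) + (1 + κ * (w * conj w)) * wderiv (wderivBar f) w)
        + α * (f w + conj w * wderivBar f w) := by
  have hdf : Differentiable ℝ f := hf.differentiable two_ne_zero
  have hdwf : Differentiable ℝ (wderiv f) :=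
    (hf.wderiv (m := 1) le_rfl).differentiable one_ne_zero
  ext w
  rw [nabla_eq]
  simp (disch := fun_prop) only [wderivBar_add, wderivBar_neg, wderivBar_mul, wderivBar_const,
    wderivBar_id, wderivBar_conj, ← wderiv_wderivBar_comm hf]
  ring

theorem twistedLap_nabla (κ ν : ℝ) (hf : ContDiff ℝ 3 f) (z : ℂ) :
    twistedLap κ ν (nabla κ (ν + κ) f) z
      = nabla κ (ν + κ) (twistedLap κ (ν + κ) f) z
        + ((2 * ν + κ : ℝ) : ℂ) * nabla κ (ν + κ) f z := by
  have hf₂ : ContDiff ℝ 2 f := hf.of_le (by norm_num)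
  have hdf : Differentiable ℝ f := hf.differentiable (by norm_num)
  have hdwf : Differentiable ℝ (wderiv f) :=
    (hf.wderiv (m := 2) le_rfl).differentiable two_ne_zero
  have hdwbf : Differentiable ℝ (wderivBar f) :=
    (hf.wderivBar (m := 2) le_rfl).differentiable two_ne_zero
  have hdwwbf : Differentiable ℝ (wderiv (wderivBar f)) :=
    ((hf.wderivBar (m := 2) le_rfl).wderiv (m := 1) le_rfl).differentiable one_ne_zero
  rw [twistedLap, wderivBar_nabla _ _ hf₂, nabla_eq, nabla_eq, twistedLap_eq]
  simp (disch := fun_prop) only [wderiv_add, wderiv_sub, wderiv_neg, wderiv_mul, wderiv_const,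
    wderiv_id, wderiv_conj, ofReal_one_add_mul_normSq, ← mul_conj]
  push_cast
  ring

end TwistedLaplacian

theorem stmt3 (κ ν E : ℝ) (Ψ : ℂ → ℂ) (hΨ : ContDiff ℝ (⊤ : ℕ∞) Ψ)
    (hE : ∀ z : ℂ, 0 < 1 + κ * Complex.normSq z →
      twistedLap κ (ν + κ) Ψ z = (E : ℂ) * Ψ z) :
    ∀ z : ℂ, 0 < 1 + κ * Complex.normSq z →
      twistedLap κ ν (nabla κ (ν + κ) Ψ) z
        = ((E + 2 * ν + κ : ℝ) : ℂ) * nabla κ (ν + κ) Ψ z := by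
  intro z hz
  have hU : IsOpen {w : ℂ | 0 < 1 + κ * normSq w} := isOpen_lt continuous_const (by fun_prop)
  have hLΨ : twistedLap κ (ν + κ) Ψ =ᶠ[nhds z] fun w => (E : ℂ) * Ψ w :=
    Filter.eventually_of_mem (hU.mem_nhds hz) hE
  have hwderiv : wderiv (twistedLap κ (ν + κ) Ψ) z = E * wderiv Ψ z := by
    rw [hLΨ.wderiv_eq, wderiv_mul (differentiableAt_const _) (hΨ.differentiable (by simp) z),
      wderiv_const, zero_mul, zero_add]
  rw [twistedLap_nabla κ ν (hΨ.of_le (WithTop.coe_le_coe.2 le_top)) z, nabla, nabla, hwderiv,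
    hE z hz]
  push_cast
  ring
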